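/- Let q, d ≥ 2 be integers, and suppose that the density δ(q, d; s) exists for every s ∈ ℤ^5. Then for every s = (θ_u, θ_w, θ_2, θ_1, θ_0) ∈ ℤ^5, δ(q, d; s) = (1/q)·Σ_{λ=0}^{q−1} δ(q, d; q·θ_u, (λ+1−q)·θ_u + θ_w, q·θ_u + q²·θ_2, (λ+1−q)·θ_u + θ_w + (λq − q(q−1)/2)·θ_2 + q·θ_1, (λ(λ+1)/2)·θ_2 + λ·θ_1 + θ_0). -/

import Mathlib

open Filter

/-- `vq q n` is the `q`-adic valuation: `0` if `n = 0`, and otherwise the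
largest `k` such that `q ^ k` divides `n`. -/
noncomputable def vq (q n : ℕ) : ℕ := if n = 0 then 0 else sSup {k : ℕ | q ^ k ∣ n}

/-- `wq q n = ∑_{i=0}^n vq q i`. -/
noncomputable def wq (q n : ℕ) : ℕ := ∑ i ∈ Finset.range (n + 1), vq q i

/-- `uq q n = ∑_{i=0}^n wq q i`. -/
noncomputable def uq (q n : ℕ) : ℕ := ∑ i ∈ Finset.range (n + 1), wq q i

/-- `gamma q d tu tw t2 t1 t0 A` is the number of `n < A` with
`tu·u_q(n) + tw·w_q(n) + t2·n(n+1)/2 + t1·n + t0 ≡ 0 (mod d)`. -/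
noncomputable def gamma (q d : ℕ) (tu tw t2 t1 t0 : ℤ) (A : ℕ) : ℕ :=
  ((Finset.range A).filter fun n =>
    (tu * uq q n + tw * wq q n + t2 * (n * (n + 1) / 2 : ℕ) + t1 * n + t0) % (d : ℤ) = 0).card
/-!
Write `n = q m + l` with last digit `l < q`. Along this residue class `w_q(n) = m + w_q(m)`,
`2 u_q(n) = q (2 u_q(m) + m (m + 1)) + 2 (l + 1 - q) (m + w_q(m))` and
`n (n + 1) / 2 = q² m (m + 1) / 2 + (l q - q (q - 1) / 2) m + l (l + 1) / 2`, so the form with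
coefficients `s` evaluated at `n` is the form with the transformed coefficients `s_l` evaluated
at `m`. Hence `γ(q N, q, d; s) = Σ_l γ(N, q, d; s_l)`; divide by `q N` and let `N → ∞`.
-/

open Finset Topology

lemma vq_eq_padicValNat {q : ℕ} (hq : q ≠ 1) (n : ℕ) : vq q n = padicValNat q n := by
  unfold vq
  split_ifs with hn
  · simp [hn]
  · have hset : {k : ℕ | q ^ k ∣ n} = Set.Iic (padicValNat q n) := by
      ext k
      exact Nat.pow_dvd_iff_le_padicValNat hq hn
    rw [hset, csSup_Iic]

lemma wq_succ (q n : ℕ) : wq q (n + 1) = wq q n + vq q (n + 1) :=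
  sum_range_succ _ _

lemma uq_succ (q n : ℕ) : uq q (n + 1) = uq q n + wq q (n + 1) :=
  sum_range_succ _ _

@[simp]
lemma wq_zero (q : ℕ) : wq q 0 = 0 := by
  simp [wq, vq]

@[simp]
lemma uq_zero (q : ℕ) : uq q 0 = 0 := by
  simp [uq]

lemma wq_mul_add_eq_wq_mul {q : ℕ} (hq : 1 < q) {l : ℕ} (hl : l < q) (m : ℕ) :
    wq q (q * m + l) = wq q (q * m) := by
  induction l with
  | zero => rfl
  | succ l ih =>
    have hndvd : ¬ q ∣ q * m + (l + 1) := by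
      rw [Nat.dvd_add_right (dvd_mul_right q m)]
      exact Nat.not_dvd_of_pos_of_lt l.succ_pos hl
    rw [← add_assoc, wq_succ, ih (by omega), add_assoc, vq_eq_padicValNat hq.ne',
      padicValNat.eq_zero_of_not_dvd hndvd, add_zero]

lemma wq_mul_add {q : ℕ} (hq : 1 < q) {l : ℕ} (hl : l < q) (m : ℕ) :
    wq q (q * m + l) = m + wq q m := by
  rw [wq_mul_add_eq_wq_mul hq hl]
  induction m with
  | zero => simp
  | succ m ih =>
    have hsplit : q * (m + 1) = q * m + (q - 1) + 1 := by rw [mul_add_one]; omega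
    rw [hsplit, wq_succ, wq_mul_add_eq_wq_mul hq (by omega), ih, ← hsplit,
      vq_eq_padicValNat hq.ne', padicValNat_base_mul hq m.succ_ne_zero, wq_succ,
      vq_eq_padicValNat hq.ne']
    ring

lemma uq_mul_add {q : ℕ} (hq : 1 < q) {l : ℕ} (hl : l < q) (m : ℕ) :
    uq q (q * m + l) = uq q (q * m) + l * (m + wq q m) := by
  induction l with
  | zero => simp
  | succ l ih =>
    rw [← add_assoc, uq_succ, ih (by omega), add_assoc (q * m) l 1, wq_mul_add hq hl]
    ring

lemma two_mul_uq_mul_add_pred {q : ℕ} (hq : 1 < q) (m : ℕ) :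
    2 * uq q (q * m + (q - 1)) = q * (2 * uq q m + m * (m + 1)) := by
  obtain ⟨p, rfl⟩ : ∃ p, q = p + 1 := ⟨q - 1, by omega⟩
  rw [Nat.add_sub_cancel]
  induction m with
  | zero => simpa using uq_mul_add hq (lt_add_one p) 0
  | succ m ih =>
    have hblock := uq_mul_add hq (lt_add_one p) (m + 1)
    have hstep : uq (p + 1) ((p + 1) * (m + 1)) =
        uq (p + 1) ((p + 1) * m + p) + wq (p + 1) ((p + 1) * (m + 1)) := by
      rw [show (p + 1) * (m + 1) = (p + 1) * m + p + 1 by ring, uq_succ]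
    have hw := wq_mul_add hq (Nat.succ_pos p) (m + 1)
    rw [add_zero] at hw
    rw [hblock, hstep, hw, uq_succ]
    linear_combination ih

lemma two_mul_uq_mul_add {q : ℕ} (hq : 1 < q) {l : ℕ} (hl : l < q) (m : ℕ) :
    2 * (uq q (q * m + l) : ℤ) =
      q * (2 * uq q m + m * (m + 1)) + 2 * ((l : ℤ) + 1 - q) * (m + wq q m) := by
  have hl' := uq_mul_add hq hl m
  have hpred := uq_mul_add hq (Nat.sub_one_lt_of_lt hq) m
  have htop := two_mul_uq_mul_add_pred hq m
  zify [hq.le] at hl' hpred htop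
  linear_combination 2 * hl' - 2 * hpred + htop

lemma two_mul_cast_div_two {n : ℕ} (hn : Even n) : 2 * ((n / 2 : ℕ) : ℤ) = n := by
  exact_mod_cast Nat.mul_div_cancel' hn.two_dvd

noncomputable def thetaForm (q : ℕ) (tu tw t2 t1 t0 : ℤ) (n : ℕ) : ℤ :=
  tu * uq q n + tw * wq q n + t2 * (n * (n + 1) / 2 : ℕ) + t1 * n + t0

lemma thetaForm_mul_add {q : ℕ} (hq : 1 < q) (tu tw t2 t1 t0 : ℤ) {l : ℕ} (hl : l < q)
    (m : ℕ) :
    thetaForm q tu tw t2 t1 t0 (q * m + l) =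
      thetaForm q ((q : ℤ) * tu) (((l : ℤ) + 1 - q) * tu + tw)
        ((q : ℤ) * tu + (q : ℤ) ^ 2 * t2)
        (((l : ℤ) + 1 - q) * tu + tw + ((l : ℤ) * q - (q * (q - 1) / 2 : ℕ)) * t2
          + (q : ℤ) * t1)
        ((l * (l + 1) / 2 : ℕ) * t2 + (l : ℤ) * t1 + t0) m := by
  have hu := two_mul_uq_mul_add hq hl m
  have hw : (wq q (q * m + l) : ℤ) = m + wq q m := by exact_mod_cast wq_mul_add hq hl m
  have hn := two_mul_cast_div_two (Nat.even_mul_succ_self (q * m + l))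
  have hm := two_mul_cast_div_two (Nat.even_mul_succ_self m)
  have hl2 := two_mul_cast_div_two (Nat.even_mul_succ_self l)
  have hq2 := two_mul_cast_div_two (Nat.even_mul_pred_self q)
  push_cast [hq.le] at hn hm hl2 hq2
  unfold thetaForm
  refine mul_left_cancel₀ (two_ne_zero' ℤ) ?_
  push_cast [hq.le]
  linear_combination tu * hu + 2 * tw * hw + t2 * hn - ((q : ℤ) * tu + (q : ℤ) ^ 2 * t2) * hm
    + (m : ℤ) * t2 * hq2 - t2 * hl2

lemma gamma_eq_card_filter (q d : ℕ) (tu tw t2 t1 t0 : ℤ) (A : ℕ) :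
    gamma q d tu tw t2 t1 t0 A = #{n ∈ range A | thetaForm q tu tw t2 t1 t0 n % d = 0} :=
  rfl

lemma sum_range_mul_eq_sum_sum {M : Type*} [AddCommMonoid M] (q N : ℕ) (f : ℕ → M) :
    ∑ i ∈ range (q * N), f i = ∑ m ∈ range N, ∑ l ∈ range q, f (q * m + l) := by
  induction N with
  | zero => simp
  | succ N ih => rw [mul_add_one, sum_range_add, ih, sum_range_succ]

lemma gamma_mul {q : ℕ} (hq : 1 < q) (d : ℕ) (tu tw t2 t1 t0 : ℤ) (N : ℕ) :
    gamma q d tu tw t2 t1 t0 (q * N) =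
      ∑ l ∈ range q,
        gamma q d ((q : ℤ) * tu) (((l : ℤ) + 1 - q) * tu + tw)
          ((q : ℤ) * tu + (q : ℤ) ^ 2 * t2)
          (((l : ℤ) + 1 - q) * tu + tw + ((l : ℤ) * q - (q * (q - 1) / 2 : ℕ)) * t2
            + (q : ℤ) * t1)
          ((l * (l + 1) / 2 : ℕ) * t2 + (l : ℤ) * t1 + t0) N := by
  simp only [gamma_eq_card_filter, card_filter]
  rw [sum_range_mul_eq_sum_sum, sum_comm]
  refine sum_congr rfl fun l hl => sum_congr rfl fun m _ => ?_
  rw [thetaForm_mul_add hq tu tw t2 t1 t0 (mem_range.mp hl)]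

lemma eq_mul_sum_of_tendsto_div {q : ℕ} (hq : 0 < q) {f : ℕ → ℕ} {g : ℕ → ℕ → ℕ}
    {a : ℝ} {b : ℕ → ℝ} (hfg : ∀ N, f (q * N) = ∑ l ∈ range q, g l N)
    (hf : Tendsto (fun N ↦ (f N : ℝ) / N) atTop (𝓝 a))
    (hg : ∀ l ∈ range q, Tendsto (fun N ↦ (g l N : ℝ) / N) atTop (𝓝 (b l))) :
    a = 1 / q * ∑ l ∈ range q, b l := by
  refine tendsto_nhds_unique (hf.comp (tendsto_id.const_mul_atTop' hq)) ?_
  refine ((tendsto_finsetSum _ hg).const_mul _).congr fun N ↦ ?_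
  simp only [Function.comp_apply, id, hfg, Nat.cast_sum, Nat.cast_mul, sum_div, mul_sum]
  refine sum_congr rfl fun l _ ↦ ?_
  rw [div_mul_div_comm, one_mul]

theorem stmt_5_general (q d : ℕ) (hq : 2 ≤ q)
    (delta : ℤ → ℤ → ℤ → ℤ → ℤ → ℝ)
    (hdelta : ∀ tu tw t2 t1 t0 : ℤ,
      Tendsto (fun N : ℕ => (gamma q d tu tw t2 t1 t0 N : ℝ) / N) atTop
        (nhds (delta tu tw t2 t1 t0)))
    (tu tw t2 t1 t0 : ℤ) :
    delta tu tw t2 t1 t0 =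
      (1 / (q : ℝ)) * ∑ lam ∈ Finset.range q,
        delta
          ((q : ℤ) * tu)
          (((lam : ℤ) + 1 - q) * tu + tw)
          ((q : ℤ) * tu + (q : ℤ) ^ 2 * t2)
          (((lam : ℤ) + 1 - q) * tu + tw + ((lam : ℤ) * q - (q * (q - 1) / 2 : ℕ)) * t2
            + (q : ℤ) * t1)
          ((lam * (lam + 1) / 2 : ℕ) * t2 + (lam : ℤ) * t1 + t0) :=
  eq_mul_sum_of_tendsto_div (by omega) (gamma_mul hq d tu tw t2 t1 t0) (hdelta _ _ _ _ _)
    fun _ _ ↦ hdelta _ _ _ _ _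

theorem stmt_5 (q d : ℕ) (hq : 2 ≤ q) (hd : 2 ≤ d)
    (delta : ℤ → ℤ → ℤ → ℤ → ℤ → ℝ)
    (hdelta : ∀ tu tw t2 t1 t0 : ℤ,
      Tendsto (fun N : ℕ => (gamma q d tu tw t2 t1 t0 N : ℝ) / N) atTop
        (nhds (delta tu tw t2 t1 t0)))
    (tu tw t2 t1 t0 : ℤ) :
    delta tu tw t2 t1 t0 =
      (1 / (q : ℝ)) * ∑ lam ∈ Finset.range q,
        delta
          ((q : ℤ) * tu)
          (((lam : ℤ) + 1 - q) * tu + tw)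
          ((q : ℤ) * tu + (q : ℤ) ^ 2 * t2)
          (((lam : ℤ) + 1 - q) * tu + tw + ((lam : ℤ) * q - (q * (q - 1) / 2 : ℕ)) * t2
            + (q : ℤ) * t1)
          ((lam * (lam + 1) / 2 : ℕ) * t2 + (lam : ℤ) * t1 + t0) :=
  stmt_5_general q d hq delta hdelta tu tw t2 t1 t0
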